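/- Let t = 2^a with a = 4c + d, 0 ≤ d ≤ 3, so ρ(t) = 8c + 2^d. Write each element of {0,…,ρ(t)−1} as 8l + m with 0 ≤ m ≤ 7 (l = c forces m < 2^d). Define γ_t(8l+m) = (8t/15)(1 − 2^{−4l}) + t·m·16^{−(l+1)} if l < c, and γ_t(8l+m) = (8t/15)(1 − 2^{−4c}) + m if l = c. Define χ_t(8l+m) = 0 if l = 0, m = 0; (t/2)·2^{−4(l−1)} if l ≠ 0, m = 0; ψ̂_{2^d}(m) if l = c, m ≠ 0; (t/2)·2^{−4l} + t·ψ̂_8(m)·2^{−4(l+1)} if l ≠ c, m ≠ 0. Then for all x₁, x₂ ∈ {0,…,ρ(t)−1} with x₁ ≠ x₂, the Hamming weight |(γ_t(x₁) ⊕ γ_t(x₂)) ∧ (χ_t(x₁) ⊕ χ_t(x₂))| is odd. -/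

import Mathlib

/-- Hamming weight (popcount) of a natural number. -/
def hw (x : ℕ) : ℕ := (Nat.digits 2 x).sum

/-- The permutation `φ₁` of `{0,…,7}` sending `(0,1,2,3,4,5,6,7)` to `(0,1,2,3,4,7,5,6)`. -/
def phi1 : ℕ → ℕ
  | 5 => 7
  | 6 => 5
  | 7 => 6
  | x => x

/-- `ψ̂_{2^e}(m) = (2^e − φ₁(m)) mod 2^e`. -/
def psiHat (e m : ℕ) : ℕ := (2 ^ e - phi1 m) % 2 ^ e

/-- Geramita–Pullman map `γ_t` (`t = 2^a`, `a = 4c + d`):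
`γ_t(8l+m) = (8t/15)(1 − 2^{−4l}) + t·m·16^{−(l+1)}` if `l < c`, and
`γ_t(8l+m) = (8t/15)(1 − 2^{−4c}) + m` if `l = c` (all values exact naturals). -/
def gammaGP (a c x : ℕ) : ℕ :=
  let l := x / 8
  let m := x % 8
  if l < c then 8 * (2 ^ a - 2 ^ a / 16 ^ l) / 15 + 2 ^ a * m / 16 ^ (l + 1)
  else 8 * (2 ^ a - 2 ^ a / 16 ^ c) / 15 + m

/-- Geramita–Pullman map `χ_t` (`t = 2^a`, `a = 4c + d`):
`χ_t(8l+m) = 0` if `l = 0, m = 0`; `(t/2)·2^{−4(l−1)}` if `l ≠ 0, m = 0`;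
`ψ̂_{2^d}(m)` if `l = c, m ≠ 0`; `(t/2)·2^{−4l} + t·ψ̂_8(m)·2^{−4(l+1)}` if
`l ≠ c, m ≠ 0` (all values exact naturals). -/
def chiGP (a c d x : ℕ) : ℕ :=
  let l := x / 8
  let m := x % 8
  if m = 0 then (if l = 0 then 0 else 8 * 2 ^ a / 16 ^ l)
  else if l = c then psiHat d m
  else (2 ^ a / 2) / 16 ^ l + (2 ^ a / 16 ^ (l + 1)) * psiHat 3 m

/-!
Over `𝔽₂`, `B(u, v) = |u ∧ v| mod 2` is bilinear for `⊕`, so for `x₁ < x₂` the claim is that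
`B(γ x₁, χ x₁) + (B(γ x₁, χ x₂) + B(γ x₂, χ x₁)) + B(γ x₂, χ x₂)` equals `1`.
In base 16, `γ_t(8l+m)` has the digit 8 in the first `l` hexadecimal places below `t` and the
digit `m` in the next one (the lowest `d` bits for the last block `l = c`), while
`χ_t(8l'+m')` occupies a single place: the marker 8 in place `l'` when `m' = 0`, and
`8 + ψ̂_8(m')` in place `l' + 1` (or `ψ̂_{2^d}(m')` in the lowest bits) otherwise.
So `B(γ x, χ y)` is `1` when `y ≠ 0` lies in an earlier block than `x`, `0` when in a later one,
and inside one block it is the pairing of the square ROD `(m, ψ̂_{2^e}(m))`, `2^e ≤ 8`, which is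
checked directly. This gives `B(γ x, χ x) = [x ≠ 0]` and `B(γ x, χ y) + B(γ y, χ x) = [x ≠ 0]`
for `x < y`, and the sum above is `[x₁ ≠ 0] + [x₁ ≠ 0] + 1 = 1`.
-/

open Finset

theorem hw_eq_mod_two_add_hw_div_two (n : ℕ) : hw n = n % 2 + hw (n / 2) := by
  rcases Nat.eq_zero_or_pos n with rfl | hn
  · rfl
  · rw [hw, Nat.digits_def' one_lt_two hn, List.sum_cons, hw]

theorem hw_two_pow_mul (k n : ℕ) : hw (2 ^ k * n) = hw n := by
  rcases Nat.eq_zero_or_pos n with rfl | hn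
  · simp
  · simp [hw, Nat.digits_base_pow_mul one_lt_two hn]

theorem hw_xor (u v : ℕ) : (hw (u ^^^ v) : ZMod 2) = hw u + hw v := by
  induction u using Nat.strong_induction_on generalizing v with
  | _ u ih =>
    rcases Nat.eq_zero_or_pos u with rfl | hu
    · simp [hw]
    · rw [hw_eq_mod_two_add_hw_div_two (u ^^^ v), hw_eq_mod_two_add_hw_div_two u,
        hw_eq_mod_two_add_hw_div_two v, Nat.xor_div_two, Nat.xor_mod_two_eq]
      push_cast [ih _ (Nat.div_lt_self hu one_lt_two), ZMod.natCast_mod]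
      ring

theorem hw_xor_and_xor (u₁ u₂ v₁ v₂ : ℕ) :
    (hw ((u₁ ^^^ u₂) &&& (v₁ ^^^ v₂)) : ZMod 2) =
      hw (u₁ &&& v₁) + hw (u₁ &&& v₂) + hw (u₂ &&& v₁) + hw (u₂ &&& v₂) := by
  simp only [Nat.and_xor_distrib_left, Nat.and_xor_distrib_right, hw_xor]
  ring

theorem hw_and_of_lt {v w : ℕ} (x : ℕ) (hv : v < 2 ^ w) : hw (x &&& v) = hw (x % 2 ^ w &&& v) := by
  rw [← Nat.mod_eq_of_lt (Nat.and_lt_two_pow x hv), Nat.and_mod_two_pow, Nat.mod_eq_of_lt hv]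

theorem hw_and_two_pow_mul {v w : ℕ} (x s : ℕ) (hv : v < 2 ^ w) :
    hw (x &&& 2 ^ s * v) = hw (x / 2 ^ s % 2 ^ w &&& v) := by
  have : x &&& 2 ^ s * v = 2 ^ s * (x / 2 ^ s &&& v) := by
    apply Nat.eq_of_testBit_eq
    intro i
    simp only [Nat.testBit_and, Nat.testBit_two_pow_mul, Nat.testBit_div_two_pow]
    by_cases hi : s ≤ i
    · simp [hi, Nat.sub_add_cancel hi]
    · simp [hi]
  rw [this, hw_two_pow_mul, hw_and_of_lt _ hv]

theorem add_two_pow_mul_div_two_pow_mod {lo n s w : ℕ} (h : ℕ) (hlo : lo < 2 ^ s) (hn : n < 2 ^ w) :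
    (lo + 2 ^ s * (n + 2 ^ w * h)) / 2 ^ s % 2 ^ w = n := by
  rw [Nat.add_mul_div_left _ _ (Nat.two_pow_pos s), Nat.div_eq_of_lt hlo, zero_add,
    Nat.add_mul_mod_self_left, Nat.mod_eq_of_lt hn]

theorem hw_and_psiHat_self {e m : ℕ} (he : e ≤ 3) (hm : m < 2 ^ e) :
    (hw (m &&& psiHat e m) : ZMod 2) = if m = 0 then 0 else 1 := by
  interval_cases e <;> revert m <;> decide

theorem hw_and_psiHat_add_swap {e m m' : ℕ} (he : e ≤ 3) (hmm' : m < m') (hm' : m' < 2 ^ e) :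
    (hw (m &&& psiHat e m') + hw (m' &&& psiHat e m) : ZMod 2) = if m = 0 then 0 else 1 := by
  interval_cases e <;> interval_cases m' <;> revert m <;> decide

theorem psiHat_lt (e m : ℕ) : psiHat e m < 2 ^ e := Nat.mod_lt _ (Nat.two_pow_pos e)

@[simp] theorem psiHat_zero (e : ℕ) : psiHat e 0 = 0 := by simp [psiHat, phi1]

@[simp] theorem hw_zero : hw 0 = 0 := rfl

@[simp] theorem hw_eight : hw 8 = 1 := by decide

theorem and_eight_of_lt {m : ℕ} (hm : m < 8) : m &&& 8 = 0 := by
  revert m; decide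

theorem and_eight_add_of_lt {m p : ℕ} (hm : m < 8) (hp : p < 8) : m &&& (8 + p) = m &&& p := by
  revert m; revert p; decide

theorem eight_and_eight_add {p : ℕ} (hp : p < 8) : 8 &&& (8 + p) = 8 := by
  revert p; decide

def hexEights (l : ℕ) : ℕ := ∑ i ∈ range l, 8 * 16 ^ i

theorem fifteen_mul_hexEights_add_eight (l : ℕ) : 15 * hexEights l + 8 = 8 * 16 ^ l := by
  induction l with
  | zero => rfl
  | succ l ih => rw [hexEights, sum_range_succ, ← hexEights, pow_succ]; omega

theorem hexEights_lt (l : ℕ) : hexEights l < 16 ^ l := by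
  have := fifteen_mul_hexEights_add_eight l; omega

theorem hexEights_add (j n : ℕ) :
    hexEights (j + 1 + n) = hexEights j + 16 ^ j * (8 + 16 * hexEights n) := by
  simp only [hexEights, sum_range_add, sum_range_one, mul_add, mul_sum, add_zero, add_assoc]
  congr 2
  · ring
  · exact sum_congr rfl fun i _ => by ring

theorem sixteen_pow (k : ℕ) : (16 : ℕ) ^ k = 2 ^ (4 * k) := by rw [pow_mul]; rfl

theorem eight_mul_sub_div_fifteen (n l : ℕ) :
    8 * (n * 16 ^ l - n) / 15 = n * hexEights l := by
  have h := fifteen_mul_hexEights_add_eight l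
  rw [← Nat.mul_sub_one, show 8 * (n * (16 ^ l - 1)) = 15 * (n * hexEights l) by
    rw [mul_left_comm, show 8 * (16 ^ l - 1) = 15 * hexEights l by omega]; ring]
  exact Nat.mul_div_cancel_left _ (by norm_num)

section ClosedForms

variable {a c d l m e : ℕ}

theorem gammaGP_of_lt (hl : l < c) (hm : m < 8) (ha : a = 4 * (l + 1) + e) :
    gammaGP a c (8 * l + m) = 2 ^ e * m + 2 ^ (e + 4) * hexEights l := by
  have h2a : 2 ^ a = 2 ^ (e + 4) * 16 ^ l := by rw [sixteen_pow, ha]; ring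
  have hm' : 2 ^ a * m / 16 ^ (l + 1) = 2 ^ e * m := by
    rw [show 2 ^ a * m = 16 ^ (l + 1) * (2 ^ e * m) by rw [sixteen_pow, ha]; ring,
      Nat.mul_div_cancel_left _ (by positivity)]
  simp only [gammaGP, show (8 * l + m) / 8 = l by omega, show (8 * l + m) % 8 = m by omega,
    if_pos hl]
  rw [hm', h2a, Nat.mul_div_cancel _ (by positivity), eight_mul_sub_div_fifteen, add_comm]

theorem gammaGP_of_eq (ha : a = 4 * c + d) (hm : m < 8) :
    gammaGP a c (8 * c + m) = m + 2 ^ d * hexEights c := by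
  have h2a : 2 ^ a = 2 ^ d * 16 ^ c := by rw [sixteen_pow, ha]; ring
  simp only [gammaGP, show (8 * c + m) / 8 = c by omega, show (8 * c + m) % 8 = m by omega,
    lt_irrefl, if_false, h2a, Nat.mul_div_cancel _ (Nat.pow_pos (by norm_num : 0 < 16)),
    eight_mul_sub_div_fifteen]
  ring

theorem chiGP_eight_mul (hl : l ≠ 0) (ha : a = 4 * l + e) : chiGP a c d (8 * l) = 2 ^ e * 8 := by
  simp only [chiGP, show 8 * l / 8 = l by omega, Nat.mul_mod_right, if_true, if_neg hl]
  rw [sixteen_pow, ha, pow_add, mul_left_comm, Nat.mul_div_cancel_left _ (Nat.two_pow_pos _),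
    mul_comm]

theorem chiGP_of_ne (hl : l ≠ c) (hm₀ : m ≠ 0) (hm : m < 8) (ha : a = 4 * (l + 1) + e) :
    chiGP a c d (8 * l + m) = 2 ^ e * (8 + psiHat 3 m) := by
  have hhalf : 2 ^ a / 2 / 16 ^ l = 2 ^ e * 8 := by
    rw [Nat.div_div_eq_div_mul, show 2 ^ a = 2 * 16 ^ l * (2 ^ e * 8) by rw [sixteen_pow, ha]; ring,
      Nat.mul_div_cancel_left _ (by positivity)]
  have hq : 2 ^ a / 16 ^ (l + 1) = 2 ^ e := by
    rw [show 2 ^ a = 16 ^ (l + 1) * 2 ^ e by rw [sixteen_pow, ha]; ring,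
      Nat.mul_div_cancel_left _ (by positivity)]
  simp only [chiGP, show (8 * l + m) / 8 = l by omega, show (8 * l + m) % 8 = m by omega,
    if_neg hm₀, if_neg hl]
  rw [hhalf, hq]
  ring

theorem chiGP_of_eq (hm₀ : m ≠ 0) (hm : m < 8) : chiGP a c d (8 * c + m) = psiHat d m := by
  simp [chiGP, show (8 * c + m) / 8 = c by omega, show (8 * c + m) % 8 = m by omega, hm₀]

end ClosedForms

section Digits

variable {a c d l m : ℕ}

theorem gammaGP_eq_add_two_pow_mul_hexEights {g : ℕ} (ha : a = 4 * c + d) (hl : l ≤ c) (hm : m < 8)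
    (hlm : l = c → m < 2 ^ d) (hg : a = 4 * l + g) :
    ∃ T < 2 ^ g, gammaGP a c (8 * l + m) = T + 2 ^ g * hexEights l := by
  rcases hl.lt_or_eq with hl | rfl
  · obtain ⟨e, rfl⟩ : ∃ e, g = e + 4 := ⟨g - 4, by omega⟩
    refine ⟨2 ^ e * m, ?_, gammaGP_of_lt hl hm (by omega)⟩
    rw [pow_add]
    exact Nat.mul_lt_mul_of_pos_left (by omega) (Nat.two_pow_pos e)
  · obtain rfl : g = d := by omega
    exact ⟨m, hlm rfl, gammaGP_of_eq ha hm⟩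

theorem gammaGP_div_two_pow_mod {k e : ℕ} (ha : a = 4 * c + d) (hl : l ≤ c) (hm : m < 8)
    (hlm : l = c → m < 2 ^ d) (hk : k ≠ 0) (hkc : k ≤ c) (he : a = 4 * k + e) :
    gammaGP a c (8 * l + m) / 2 ^ e % 2 ^ 4 = if k ≤ l then 8 else if k = l + 1 then m else 0 := by
  split_ifs with hkl hkl'
  · obtain ⟨T, hT, hγ⟩ := gammaGP_eq_add_two_pow_mul_hexEights (g := a - 4 * l) ha hl hm hlm
      (by omega)
    have hsplit := hexEights_add (l - k) (k - 1)
    rw [show l - k + 1 + (k - 1) = l by omega] at hsplit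
    have hlow : T + 2 ^ (a - 4 * l) * hexEights (l - k) < 2 ^ e :=
      calc T + 2 ^ (a - 4 * l) * hexEights (l - k)
          < 2 ^ (a - 4 * l) * (hexEights (l - k) + 1) := by linarith
        _ ≤ 2 ^ (a - 4 * l) * 16 ^ (l - k) := by gcongr; exact hexEights_lt _
        _ = 2 ^ e := by rw [sixteen_pow, ← pow_add]; congr 1; omega
    have hγ' : gammaGP a c (8 * l + m) =
        T + 2 ^ (a - 4 * l) * hexEights (l - k) + 2 ^ e * (8 + 2 ^ 4 * hexEights (k - 1)) := by
      rw [hγ, hsplit, sixteen_pow, show e = a - 4 * l + 4 * (l - k) by omega]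
      ring
    rw [hγ', add_two_pow_mul_div_two_pow_mod _ hlow (by norm_num)]
  · have hγ : gammaGP a c (8 * l + m) = 0 + 2 ^ e * (m + 2 ^ 4 * hexEights l) := by
      rw [gammaGP_of_lt (by omega) hm (by rw [he, hkl'])]
      ring
    rw [hγ, add_two_pow_mul_div_two_pow_mod _ (Nat.two_pow_pos e) (by omega)]
  · have hγ : gammaGP a c (8 * l + m) =
        0 + 2 ^ e * (0 + 2 ^ 4 * (2 ^ (4 * (k - l - 2)) * (m + 2 ^ 4 * hexEights l))) := by
      rw [gammaGP_of_lt (e := e + 4 * (k - l - 1)) (by omega) hm (by omega),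
        show 4 * (k - l - 1) = 4 + 4 * (k - l - 2) by omega]
      ring
    rw [hγ, add_two_pow_mul_div_two_pow_mod _ (Nat.two_pow_pos e) (by norm_num)]

theorem gammaGP_mod_two_pow (ha : a = 4 * c + d) (hl : l ≤ c) (hm : m < 8)
    (hlm : l = c → m < 2 ^ d) : gammaGP a c (8 * l + m) % 2 ^ d = if l = c then m else 0 := by
  split_ifs with hlc
  · subst hlc
    rw [gammaGP_of_eq ha hm, Nat.add_mul_mod_self_left, Nat.mod_eq_of_lt (hlm rfl)]
  · rw [gammaGP_of_lt (e := 4 * (c - l - 1) + d) (by omega) hm (by omega)]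
    apply Nat.dvd_iff_mod_eq_zero.mp
    exact dvd_add (dvd_mul_of_dvd_left (pow_dvd_pow 2 (by omega)) _)
      (dvd_mul_of_dvd_left (pow_dvd_pow 2 (by omega)) _)

end Digits

/-- Block `l` of the construction is a copy of the square ROD `(m, ψ̂_{2^e}(m))` with
`e = blockExp c d l`. -/
def blockExp (c d l : ℕ) : ℕ := if l = c then d else 3

theorem blockExp_le_three (c : ℕ) {d : ℕ} (hd : d ≤ 3) (l : ℕ) : blockExp c d l ≤ 3 := by
  unfold blockExp; split_ifs <;> omega

theorem lt_two_pow_blockExp {c d l m : ℕ} (hm : m < 8) (hlm : l = c → m < 2 ^ d) :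
    m < 2 ^ blockExp c d l := by
  unfold blockExp; split_ifs with h
  exacts [hlm h, hm]

theorem hw_gammaGP_and_chiGP {a c d l m l' m' : ℕ} (ha : a = 4 * c + d)
    (hl : l ≤ c) (hm : m < 8) (hlm : l = c → m < 2 ^ d)
    (hl' : l' ≤ c) (hm' : m' < 8) (hlm' : l' = c → m' < 2 ^ d) :
    hw (gammaGP a c (8 * l + m) &&& chiGP a c d (8 * l' + m')) =
      if l' < l then (if l' = 0 ∧ m' = 0 then 0 else 1)
      else if l' = l then
        (if m' = 0 ∧ l ≠ 0 then 1 else 0) + hw (m &&& psiHat (blockExp c d l') m')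
      else 0 := by
  rcases eq_or_ne m' 0 with rfl | hm'₀
  · rcases eq_or_ne l' 0 with rfl | hl'₀
    · simp [chiGP]
      omega
    · rw [add_zero, chiGP_eight_mul hl'₀ (e := a - 4 * l') (by omega),
        hw_and_two_pow_mul _ _ (show 8 < 2 ^ 4 by norm_num),
        gammaGP_div_two_pow_mod ha hl hm hlm hl'₀ hl' (by omega)]
      split_ifs <;> first | omega | simp [and_eight_of_lt hm]
  · rcases eq_or_ne l' c with rfl | hl'c
    · rw [chiGP_of_eq hm'₀ hm', hw_and_of_lt _ (psiHat_lt d m'), gammaGP_mod_two_pow ha hl hm hlm]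
      simp only [blockExp]
      split_ifs <;> first | omega | simp
    · have hψ : psiHat 3 m' < 8 := psiHat_lt 3 m'
      simp only [blockExp, if_neg hl'c]
      rw [chiGP_of_ne hl'c hm'₀ hm' (e := a - 4 * (l' + 1)) (by omega),
        hw_and_two_pow_mul _ _ (show 8 + psiHat 3 m' < 2 ^ 4 by omega),
        gammaGP_div_two_pow_mod (k := l' + 1) ha hl hm hlm (by omega) (by omega) (by omega)]
      split_ifs <;> first | omega | simp [and_eight_add_of_lt hm hψ, eight_and_eight_add hψ]

theorem exists_eight_mul_add_of_lt {c d x : ℕ} (hd : d ≤ 3) (hx : x < 8 * c + 2 ^ d) :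
    ∃ l m, x = 8 * l + m ∧ l ≤ c ∧ m < 8 ∧ (l = c → m < 2 ^ d) := by
  have : 2 ^ d ≤ 2 ^ 3 := Nat.pow_le_pow_right two_pos hd
  exact ⟨x / 8, x % 8, by omega, by omega, by omega, by omega⟩

theorem hw_gammaGP_and_chiGP_self {a c d x : ℕ} (hd : d ≤ 3) (ha : a = 4 * c + d)
    (hx : x < 8 * c + 2 ^ d) :
    (hw (gammaGP a c x &&& chiGP a c d x) : ZMod 2) = if x = 0 then 0 else 1 := by
  obtain ⟨l, m, rfl, hl, hm, hlm⟩ := exists_eight_mul_add_of_lt hd hx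
  have hψ := hw_and_psiHat_self (blockExp_le_three c hd l) (lt_two_pow_blockExp hm hlm)
  rw [hw_gammaGP_and_chiGP ha hl hm hlm hl hm hlm]
  simp only [lt_irrefl, if_false, if_true, Nat.cast_add, hψ]
  rcases eq_or_ne m 0 with rfl | hm₀ <;> rcases eq_or_ne l 0 with rfl | hl₀ <;> simp [*]

theorem hw_gammaGP_and_chiGP_add_swap {a c d x y : ℕ} (hd : d ≤ 3) (ha : a = 4 * c + d)
    (hxy : x < y) (hy : y < 8 * c + 2 ^ d) :
    (hw (gammaGP a c x &&& chiGP a c d y) + hw (gammaGP a c y &&& chiGP a c d x) : ZMod 2) =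
      if x = 0 then 0 else 1 := by
  obtain ⟨l, m, rfl, hl, hm, hlm⟩ := exists_eight_mul_add_of_lt hd (hxy.trans hy)
  obtain ⟨l', m', rfl, hl', hm', hlm'⟩ := exists_eight_mul_add_of_lt hd hy
  rw [hw_gammaGP_and_chiGP ha hl hm hlm hl' hm' hlm',
    hw_gammaGP_and_chiGP ha hl' hm' hlm' hl hm hlm]
  rcases lt_or_eq_of_le (show l ≤ l' by omega) with hll' | rfl
  · simp [hll', hll'.ne', not_lt.mpr hll'.le, Nat.add_eq_zero_iff]
  · have hψ := hw_and_psiHat_add_swap (blockExp_le_three c hd l) (show m < m' by omega)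
      (lt_two_pow_blockExp hm' hlm')
    simp only [lt_irrefl, if_false, if_true, show m' ≠ 0 by omega, false_and, Nat.cast_add,
      zero_add]
    rw [add_left_comm, hψ]
    rcases eq_or_ne m 0 with rfl | hm₀ <;> rcases eq_or_ne l 0 with rfl | hl₀ <;> simp [*]

/-- the Geramita–Pullman maps `(γ_t, χ_t)` satisfy the odd Hamming-weight
condition: for distinct `x₁, x₂ < ρ(t) = 8c + 2^d`,
`|(γ_t(x₁) ⊕ γ_t(x₂)) ∧ (χ_t(x₁) ⊕ χ_t(x₂))|` is odd. -/
theorem stmt16 (a c d : ℕ) (hd : d ≤ 3) (ha : a = 4 * c + d)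
    (x₁ x₂ : ℕ) (h₁ : x₁ < 8 * c + 2 ^ d) (h₂ : x₂ < 8 * c + 2 ^ d) (hne : x₁ ≠ x₂) :
    Odd (hw ((gammaGP a c x₁ ^^^ gammaGP a c x₂) &&&
      (chiGP a c d x₁ ^^^ chiGP a c d x₂))) := by
  wlog hlt : x₁ < x₂ generalizing x₁ x₂
  · rw [Nat.xor_comm (gammaGP a c x₁), Nat.xor_comm (chiGP a c d x₁)]
    exact this x₂ x₁ h₂ h₁ hne.symm (by omega)
  have hself₁ := hw_gammaGP_and_chiGP_self hd ha h₁
  have hself₂ := hw_gammaGP_and_chiGP_self hd ha h₂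
  have hswap := hw_gammaGP_and_chiGP_add_swap hd ha hlt h₂
  rw [if_neg (by omega)] at hself₂
  rw [← ZMod.natCast_eq_one_iff_odd, hw_xor_and_xor,
    add_assoc (hw (gammaGP a c x₁ &&& chiGP a c d x₁) : ZMod 2), hswap, hself₁, hself₂,
    CharTwo.add_self_eq_zero, zero_add]
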